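/- arXiv:2307.09853 — 2 statements merged into one kernel-verified Lean document; each statement's English description precedes it below -/
import Mathlib

section
/- For |q| < 1 (or as formal power series), φ(q)^2 = φ(q^4)^2 + 4q·ψ(q^4)^2 + 4q^2·ψ(q^8)^2, where φ(q) = ∑_{n∈ℤ} q^{n^2} and ψ(q) = ∑_{n≥0} q^{n(n+1)/2}. -/
open scoped BigOperators

/-- The q-Pochhammer infinite product (a;q)_∞ = ∏_{n≥0} (1 - a qⁿ). -/
noncomputable def qpoch (a q : ℂ) : ℂ := ∏' n : ℕ, (1 - a * q ^ n)

/-- The theta-like product [a;q]_∞ = (a;q)_∞ (q/a;q)_∞. -/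
noncomputable def jac (a q : ℂ) : ℂ := qpoch a q * qpoch (q / a) q

/-- J_m = (q^m;q^m)_∞. -/
noncomputable def Jm (m : ℕ) (q : ℂ) : ℂ := qpoch (q ^ m) (q ^ m)

/-- Ramanujan's theta function φ(q) = ∑_{n∈ℤ} q^{n²}. -/
noncomputable def phiT (q : ℂ) : ℂ := ∑' n : ℤ, q ^ (n ^ 2)

/-- Ramanujan's theta function ψ(q) = ∑_{n≥0} q^{n(n+1)/2}. -/
noncomputable def psiT (q : ℂ) : ℂ := ∑' n : ℕ, q ^ (n * (n + 1) / 2)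

/-- The Lambert-type series X(a;q). -/
noncomputable def XL (a q : ℂ) : ℂ :=
  ∑' n : ℕ, (a * q ^ n / (1 - a * q ^ n) - (q ^ (n + 1) / a) / (1 - q ^ (n + 1) / a))

open Function

lemma summable_norm_pow_exp {q : ℂ} (hq : ‖q‖ < 1) (e : ℕ → ℕ) (he : ∀ n, n ≤ e n) :
    Summable fun n : ℕ => ‖q ^ e n‖ := by
  apply Summable.of_nonneg_of_le (fun n => norm_nonneg _) (fun n => ?_)
    (summable_geometric_of_lt_one (norm_nonneg q) hq)
  rw [norm_pow]
  exact pow_le_pow_of_le_one (norm_nonneg q) hq.le (he n)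

lemma summable_norm_psi {q : ℂ} (hq : ‖q‖ < 1) :
    Summable fun n : ℕ => ‖q ^ (n * (n + 1) / 2)‖ :=
  summable_norm_pow_exp hq _ (fun n => by
    rcases Nat.eq_zero_or_pos n with h | h
    · simp [h]
    · calc n = n * 2 / 2 := by omega
        _ ≤ n * (n + 1) / 2 := Nat.div_le_div_right (by nlinarith))

lemma zpow_sq_eq (x : ℂ) (n : ℤ) : x ^ (n ^ 2) = x ^ (n.natAbs ^ 2) := by
  rw [← zpow_natCast x (n.natAbs ^ 2)]
  congr 1
  push_cast
  rw [sq_abs]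

lemma summable_norm_phi {q : ℂ} (hq : ‖q‖ < 1) :
    Summable fun n : ℤ => ‖q ^ (n ^ 2)‖ := by
  apply Summable.of_nat_of_neg_add_one
  · simpa [zpow_sq_eq] using summable_norm_pow_exp hq (fun n => ((n : ℤ).natAbs ^ 2))
      (fun n => by simp; nlinarith [Nat.le_self_pow (two_ne_zero) n])
  · simpa [zpow_sq_eq] using summable_norm_pow_exp hq (fun n => ((-(n + 1) : ℤ)).natAbs ^ 2)
      (fun n => by
        show n ≤ ((-((n : ℤ) + 1))).natAbs ^ 2
        have h : ((-((n : ℤ) + 1))).natAbs = n + 1 := by omega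
        rw [h]; nlinarith)

lemma hasSum_of_even_of_odd {f : ℤ → ℂ} {a b : ℂ}
    (h₁ : HasSum (fun n : ℤ => f (2 * n)) a)
    (h₂ : HasSum (fun n : ℤ => f (2 * n + 1)) b) : HasSum f (a + b) := by
  have hi₁ : Injective (fun n : ℤ => 2 * n) := by
    intro x y h
    change 2 * x = 2 * y at h
    omega
  have hi₂ : Injective (fun n : ℤ => 2 * n + 1) := by
    intro x y h
    change 2 * x + 1 = 2 * y + 1 at h
    omega
  have hc : IsCompl (Set.range fun n : ℤ => 2 * n) (Set.range fun n : ℤ => 2 * n + 1) := by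
    constructor
    · rw [disjoint_iff_inf_le]
      rintro x ⟨⟨i, hi⟩, ⟨j, hj⟩⟩
      change 2 * i = x at hi
      change 2 * j + 1 = x at hj
      omega
    · rw [codisjoint_iff_le_sup]
      intro x _
      rcases Int.even_or_odd x with ⟨k, hk⟩ | ⟨k, hk⟩
      · exact Set.mem_union_left _ ⟨k, show 2 * k = x by omega⟩
      · exact Set.mem_union_right _ ⟨k, show 2 * k + 1 = x by omega⟩
  exact (hi₁.hasSum_range_iff.mpr h₁).add_isCompl hc (hi₂.hasSum_range_iff.mpr h₂)

/-- The bijection `ℕ × ℕ ≃ ℤ × ℕ` underlying `ψ(q)² = φ(q)ψ(q²)`. -/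
def G : ℕ × ℕ ≃ ℤ × ℕ where
  toFun p :=
    if p.1 % 2 = p.2 % 2 then (((p.1 : ℤ) - p.2) / 2, (p.1 + p.2) / 2)
    else if p.2 < p.1 then (((p.1 : ℤ) + p.2 + 1) / 2, (p.1 - p.2 - 1) / 2)
    else (-(((p.1 : ℤ) + p.2 + 1) / 2), (p.2 - p.1 - 1) / 2)
  invFun p :=
    if p.1.natAbs ≤ p.2 then (((p.2 : ℤ) + p.1).toNat, ((p.2 : ℤ) - p.1).toNat)
    else if 0 < p.1 then (p.1.toNat + p.2, p.1.toNat - p.2 - 1)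
    else (p.1.natAbs - p.2 - 1, p.1.natAbs + p.2)
  left_inv := by
    rintro ⟨a, b⟩
    dsimp only
    split_ifs <;> dsimp only at * <;> simp only [Prod.mk.injEq] <;> constructor <;> omega
  right_inv := by
    rintro ⟨m, n⟩
    dsimp only
    split_ifs <;> dsimp only at * <;> simp only [Prod.mk.injEq] <;> constructor <;> omega

lemma tri (c : ℕ) : ∃ t : ℕ, c * (c + 1) / 2 = t ∧ c * (c + 1) = 2 * t := by
  obtain ⟨u, hu⟩ := Nat.even_mul_succ_self c
  exact ⟨u, by rw [hu]; omega, by rw [hu]; ring⟩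

lemma G_exp (a b : ℕ) :
    (G (a, b)).1.natAbs ^ 2 + (G (a, b)).2 * ((G (a, b)).2 + 1)
      = a * (a + 1) / 2 + b * (b + 1) / 2 := by
  obtain ⟨Ta, hTa1, hTa2⟩ := tri a
  obtain ⟨Tb, hTb1, hTb2⟩ := tri b
  have hTa2' : (a : ℤ) * ((a : ℤ) + 1) = 2 * Ta := by exact_mod_cast hTa2
  have hTb2' : (b : ℤ) * ((b : ℤ) + 1) = 2 * Tb := by exact_mod_cast hTb2
  simp only [G, Equiv.coe_fn_mk]
  split_ifs with h1 h2
  · obtain ⟨m, hm⟩ : ∃ m : ℤ, (a : ℤ) - b = 2 * m := ⟨((a : ℤ) - b) / 2, by omega⟩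
    obtain ⟨n, hn⟩ : ∃ n : ℕ, a + b = 2 * n := ⟨(a + b) / 2, by omega⟩
    rw [show ((a : ℤ) - b) / 2 = m from by omega, show (a + b) / 2 = n from by omega, hTa1, hTb1]
    have hA : (a : ℤ) = n + m := by omega
    have hB : (b : ℤ) = n - m := by omega
    rw [hA] at hTa2'
    rw [hB] at hTb2'
    zify
    rw [sq_abs]
    have key : 2 * (m ^ 2 + (n : ℤ) * (n + 1)) = 2 * ((Ta : ℤ) + Tb) := by
      linear_combination hTa2' + hTb2'
    linarith
  · obtain ⟨m, hm⟩ : ∃ m : ℤ, (a : ℤ) + b + 1 = 2 * m := ⟨((a : ℤ) + b + 1) / 2, by omega⟩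
    obtain ⟨n, hn⟩ : ∃ n : ℕ, a - b - 1 = 2 * n := ⟨(a - b - 1) / 2, by omega⟩
    rw [show ((a : ℤ) + b + 1) / 2 = m from by omega,
      show (a - b - 1) / 2 = n from by omega, hTa1, hTb1]
    have hA : (a : ℤ) = m + n := by omega
    have hB : (b : ℤ) = m - n - 1 := by omega
    rw [hA] at hTa2'
    rw [hB] at hTb2'
    zify
    rw [sq_abs]
    have key : 2 * (m ^ 2 + (n : ℤ) * (n + 1)) = 2 * ((Ta : ℤ) + Tb) := by
      linear_combination hTa2' + hTb2'
    linarith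
  · obtain ⟨m, hm⟩ : ∃ m : ℤ, (a : ℤ) + b + 1 = 2 * m := ⟨((a : ℤ) + b + 1) / 2, by omega⟩
    obtain ⟨n, hn⟩ : ∃ n : ℕ, b - a - 1 = 2 * n := ⟨(b - a - 1) / 2, by omega⟩
    rw [show -(((a : ℤ) + b + 1) / 2) = -m from by omega,
      show (b - a - 1) / 2 = n from by omega, hTa1, hTb1]
    have hA : (a : ℤ) = m - n - 1 := by omega
    have hB : (b : ℤ) = m + n := by omega
    rw [hA] at hTa2'
    rw [hB] at hTb2'
    zify
    rw [sq_abs]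
    have key : 2 * ((-m) ^ 2 + (n : ℤ) * (n + 1)) = 2 * ((Ta : ℤ) + Tb) := by
      linear_combination hTa2' + hTb2'
    linarith

lemma psi_sq {x : ℂ} (hx : ‖x‖ < 1) : psiT x ^ 2 = phiT x * psiT (x ^ 2) := by
  have hx2 : ‖x ^ 2‖ < 1 := by
    rw [norm_pow]
    exact pow_lt_one₀ (norm_nonneg x) hx two_ne_zero
  have hψ := summable_norm_psi hx
  have hψ2 := summable_norm_psi hx2
  have hφ := summable_norm_phi hx
  rw [sq, psiT, tsum_mul_tsum_of_summable_norm hψ hψ, phiT, psiT,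
    tsum_mul_tsum_of_summable_norm hφ hψ2,
    ← G.tsum_eq (fun p : ℤ × ℕ => x ^ (p.1 ^ 2) * (x ^ 2) ^ (p.2 * (p.2 + 1) / 2))]
  apply tsum_congr
  rintro ⟨a, b⟩
  symm
  obtain ⟨Tn, hTn1, hTn2⟩ := tri (G (a, b)).2
  show x ^ ((G (a, b)).1 ^ 2) * (x ^ 2) ^ ((G (a, b)).2 * ((G (a, b)).2 + 1) / 2)
      = x ^ (a * (a + 1) / 2) * x ^ (b * (b + 1) / 2)
  rw [zpow_sq_eq, ← pow_mul, ← pow_add, ← pow_add]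
  congr 1
  rw [hTn1]
  have := G_exp a b
  omega

lemma phi_split {q : ℂ} (hq : ‖q‖ < 1) : phiT q = phiT (q ^ 4) + 2 * q * psiT (q ^ 8) := by
  have h4 : ‖q ^ 4‖ < 1 := by
    rw [norm_pow]
    exact pow_lt_one₀ (norm_nonneg q) hq (by norm_num)
  have h8 : ‖q ^ 8‖ < 1 := by
    rw [norm_pow]
    exact pow_lt_one₀ (norm_nonneg q) hq (by norm_num)
  have hψ8 : HasSum (fun n : ℕ => (q ^ 8) ^ (n * (n + 1) / 2)) (psiT (q ^ 8)) :=
    (summable_norm_psi h8).of_norm.hasSum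
  have hφ4 : HasSum (fun n : ℤ => (q ^ 4) ^ (n ^ 2)) (phiT (q ^ 4)) :=
    (summable_norm_phi h4).of_norm.hasSum
  have heven : HasSum (fun n : ℤ => q ^ ((2 * n) ^ 2)) (phiT (q ^ 4)) := by
    have e : ∀ n : ℤ, ((q ^ 4 : ℂ)) ^ (n ^ 2) = q ^ ((2 * n) ^ 2) := by
      intro n
      rw [zpow_sq_eq, zpow_sq_eq, ← pow_mul]
      congr 1
      have h : (2 * n).natAbs = 2 * n.natAbs := by omega
      rw [h]; ring
    simpa only [e] using hφ4
  have hoddn : HasSum (fun n : ℕ => q ^ ((2 * (n : ℤ) + 1) ^ 2)) (q * psiT (q ^ 8)) := by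
    have e : ∀ n : ℕ, q * ((q ^ 8 : ℂ)) ^ (n * (n + 1) / 2) = q ^ ((2 * (n : ℤ) + 1) ^ 2) := by
      intro n
      rw [zpow_sq_eq]
      have hab : ((2 * (n : ℤ) + 1)).natAbs = 2 * n + 1 := by omega
      rw [hab, ← pow_mul, ← pow_succ']
      congr 1
      obtain ⟨t, ht1, ht2⟩ := tri n
      rw [ht1, show (2 * n + 1) ^ 2 = 4 * (n * (n + 1)) + 1 from by ring, ht2]
      omega
    simpa only [e] using hψ8.mul_left q
  have hodd : HasSum (fun n : ℤ => q ^ ((2 * n + 1) ^ 2)) (2 * q * psiT (q ^ 8)) := by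
    have h2 : HasSum (fun n : ℕ => q ^ ((2 * (-((n : ℤ) + 1)) + 1) ^ 2)) (q * psiT (q ^ 8)) := by
      have e : ∀ n : ℕ, (2 * (-((n : ℤ) + 1)) + 1) ^ 2 = (2 * (n : ℤ) + 1) ^ 2 := fun n => by ring
      simpa only [e] using hoddn
    have h := HasSum.of_nat_of_neg_add_one (f := fun n : ℤ => q ^ ((2 * n + 1) ^ 2)) hoddn h2
    have e2 : q * psiT (q ^ 8) + q * psiT (q ^ 8) = 2 * q * psiT (q ^ 8) := by ring
    rwa [e2] at h
  have := hasSum_of_even_of_odd (f := fun n : ℤ => q ^ (n ^ 2)) heven hodd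
  rw [phiT]
  exact this.tsum_eq

theorem phi_four_dissection (q : ℂ) (hq : ‖q‖ < 1) :
    phiT q ^ 2 = phiT (q ^ 4) ^ 2 + 4 * q * psiT (q ^ 4) ^ 2 + 4 * q ^ 2 * psiT (q ^ 8) ^ 2 := by
  have h4 : ‖q ^ 4‖ < 1 := by
    rw [norm_pow]
    exact pow_lt_one₀ (norm_nonneg q) hq (by norm_num)
  have hL := psi_sq h4
  rw [show ((q : ℂ) ^ 4) ^ 2 = q ^ 8 by ring] at hL
  rw [phi_split hq, hL]
  ring
end

section
/- The theta identity q·[-q^2;q^{16}]_∞ - [-q^6;q^{16}]_∞ = -[q^2,q^4,q^4,q^6,q^8;q^{16}]_∞ · J_1 J_{16} / J_2^2 holds, where [a;q]_∞ = (a;q)_∞ (q/a;q)_∞ and J_m = (q^m;q^m)_∞. -/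
open scoped BigOperators

/-!
Everything rests on the Jacobi triple product
`θ(z;q) := ∑ₙ q^{n²} zⁿ = (q²;q²)_∞ [-zq;q²]_∞`, obtained by letting `N → ∞` in its finite form
`(-zq;q²)_N (-q/z;q²)_N = ∑ₙ [2N choose N+n]_{q²} q^{n²} zⁿ`. The finite form follows by induction
on `N` from the q-Pascal rules; the Gaussian binomials are uniformly bounded and tend to
`1/(q²;q²)_∞`, so dominated convergence passes to the limit.

Applying it to `θ(-1/q;q²)` and to both halves of its even/odd splitting
`θ(-1/q;q²) = θ(q⁻²;q⁸) - q θ(q⁶;q⁸)` gives `J₄ [q;q⁴] = J₁₆ ([-q⁶;q¹⁶] - q [-q²;q¹⁶])`.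
The dissection `(a;Q)_∞ = (a;Q²)_∞ (aQ;Q²)_∞` then rewrites `[q;q⁴]`, `[q²,q⁶;q¹⁶]`, `[q⁴;q¹⁶]` and `[q⁸;q¹⁶]` as quotients of `J₁, J₂, J₄, J₈, J₁₆`.
-/

open Filter Topology

lemma norm_pow_lt_one {R : Type*} [SeminormedRing R] {x : R} (hx : ‖x‖ < 1) {k : ℕ}
    (hk : k ≠ 0) : ‖x ^ k‖ < 1 :=
  (norm_pow_le' x (Nat.pos_of_ne_zero hk)).trans_lt (pow_lt_one₀ (norm_nonneg x) hx hk)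

theorem HasSum.int_even_add_odd {M : Type*} [AddCommMonoid M] [TopologicalSpace M]
    [ContinuousAdd M] {f : ℤ → M} {a b : M} (he : HasSum (fun k => f (2 * k)) a)
    (ho : HasSum (fun k => f (2 * k + 1)) b) : HasSum f (a + b) := by
  have := mul_right_injective₀ (two_ne_zero' ℤ)
  replace ho := ((add_left_injective 1).comp this).hasSum_range_iff.2 ho
  refine (this.hasSum_range_iff.2 he).add_isCompl ?_ ho
  simpa [Function.comp_def] using Int.isCompl_even_odd

lemma summable_pow_natAbs {r : ℝ} (h0 : 0 ≤ r) (h1 : r < 1) :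
    Summable fun n : ℤ => r ^ n.natAbs :=
  .of_nat_of_neg (by simpa using summable_geometric_of_lt_one h0 h1)
    (by simpa using summable_geometric_of_lt_one h0 h1)

section qPochhammer

variable {a Q : ℂ}

lemma summable_norm_mul_pow (hQ : ‖Q‖ < 1) : Summable fun n : ℕ => ‖a * Q ^ n‖ :=
  ((summable_geometric_of_norm_lt_one hQ).mul_left a).norm

lemma one_sub_mul_pow_ne_zero (ha : ‖a‖ < 1) (hQ : ‖Q‖ ≤ 1) (n : ℕ) :
    1 - a * Q ^ n ≠ 0 := by
  refine sub_ne_zero.mpr fun h => ?_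
  have : ‖a * Q ^ n‖ < 1 := by
    rw [norm_mul, norm_pow]
    exact (mul_le_of_le_one_right (norm_nonneg a) (pow_le_one₀ (norm_nonneg Q) hQ)).trans_lt ha
  simp [← h] at this

lemma multipliable_qpoch (hQ : ‖Q‖ < 1) : Multipliable fun n : ℕ => 1 - a * Q ^ n := by
  simpa [sub_eq_add_neg] using multipliable_one_add_of_summable (f := fun n => -(a * Q ^ n))
    (by simpa using summable_norm_mul_pow hQ)

lemma qpoch_ne_zero (ha : ‖a‖ < 1) (hQ : ‖Q‖ < 1) : qpoch a Q ≠ 0 := by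
  simpa [qpoch, sub_eq_add_neg] using
    tprod_one_add_ne_zero_of_summable (f := fun n => -(a * Q ^ n))
    (by simpa [← sub_eq_add_neg] using one_sub_mul_pow_ne_zero ha hQ.le)
    (by simpa using summable_norm_mul_pow hQ)

lemma qpoch_eq_qpoch_sq_mul_qpoch_sq (hQ : ‖Q‖ < 1) :
    qpoch a Q = qpoch a (Q ^ 2) * qpoch (a * Q) (Q ^ 2) := by
  have hQ2 := norm_pow_lt_one hQ two_ne_zero
  rw [qpoch, ← tprod_even_mul_odd]
  · simp only [qpoch, pow_mul, pow_succ, mul_assoc, mul_comm Q]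
  · simpa [pow_mul] using multipliable_qpoch (a := a) hQ2
  · simpa [pow_succ, pow_mul, mul_assoc, mul_comm Q] using multipliable_qpoch (a := a * Q) hQ2

@[simp]
lemma qpoch_zero_left (Q : ℂ) : qpoch 0 Q = 1 := by
  simp [qpoch]

def qpochFin (a Q : ℂ) (N : ℕ) : ℂ := ∏ j ∈ Finset.range N, (1 - a * Q ^ j)

@[simp]
lemma qpochFin_zero : qpochFin a Q 0 = 1 :=
  Finset.prod_range_zero _

lemma qpochFin_succ (N : ℕ) : qpochFin a Q (N + 1) = qpochFin a Q N * (1 - a * Q ^ N) :=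
  Finset.prod_range_succ _ _

lemma qpochFin_ne_zero (ha : ‖a‖ < 1) (hQ : ‖Q‖ ≤ 1) (N : ℕ) : qpochFin a Q N ≠ 0 :=
  Finset.prod_ne_zero_iff.mpr fun n _ => one_sub_mul_pow_ne_zero ha hQ n

lemma tendsto_qpochFin (hQ : ‖Q‖ < 1) : Tendsto (qpochFin a Q) atTop (𝓝 (qpoch a Q)) :=
  (multipliable_qpoch hQ).hasProd.tendsto_prod_nat

end qPochhammer

section jac

variable {a Q : ℂ}

lemma jac_div_left (a Q : ℂ) (hQ : Q ≠ 0) : jac (Q / a) Q = jac a Q := by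
  rw [jac, jac, div_div_cancel₀ hQ, mul_comm]

lemma jac_sq_mul_jac_sq (hQ : ‖Q‖ < 1) :
    jac a (Q ^ 2) * jac (Q / a) (Q ^ 2) = jac a Q := by
  have h : Q ^ 2 / (Q / a) = a * Q := by
    rcases eq_or_ne Q 0 with rfl | hQ0
    · simp
    rcases eq_or_ne a 0 with rfl | ha0
    · simp
    · field_simp
  simp only [jac, h, qpoch_eq_qpoch_sq_mul_qpoch_sq (a := a) hQ,
    qpoch_eq_qpoch_sq_mul_qpoch_sq (a := Q / a) hQ]
  rw [show Q / a * Q = Q ^ 2 / a by ring]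
  ring

lemma jac_self_pow_four (ha : ‖a‖ < 1) : jac a (a ^ 4) = qpoch a (a ^ 2) := by
  have ha2 := norm_pow_lt_one ha two_ne_zero
  rcases eq_or_ne a 0 with rfl | ha0
  · simp [jac]
  rw [jac, qpoch_eq_qpoch_sq_mul_qpoch_sq (a := a) ha2, ← pow_mul]
  congr 2
  field_simp

lemma jac_self_sq (a : ℂ) : jac a (a ^ 2) = qpoch a (a ^ 2) ^ 2 := by
  rw [jac, sq a, mul_self_div_self, sq]

lemma Jm_eq_qpoch_mul_Jm (q : ℂ) (hq : ‖q‖ < 1) (m : ℕ) (hm : m ≠ 0) :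
    Jm m q = qpoch (q ^ m) (q ^ (2 * m)) * Jm (2 * m) q := by
  have hqm := norm_pow_lt_one hq hm
  rw [Jm, Jm, qpoch_eq_qpoch_sq_mul_qpoch_sq hqm, ← pow_mul, ← pow_add, mul_comm m 2, two_mul]

end jac

section qbinom

variable {t : ℂ}

/-- The Gaussian binomial coefficient `[m choose k]_t`, extended by `0` to `k < 0` and `k > m`. -/
noncomputable def qbinom (t : ℂ) (m : ℕ) (k : ℤ) : ℂ :=
  if 0 ≤ k ∧ k ≤ m then
    qpochFin t t m / (qpochFin t t k.toNat * qpochFin t t (m - k.toNat))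
  else 0

lemma qbinom_natCast {m j : ℕ} (h : j ≤ m) :
    qbinom t m j = qpochFin t t m / (qpochFin t t j * qpochFin t t (m - j)) := by
  rw [qbinom, if_pos (by omega), Int.toNat_natCast]

lemma qbinom_of_neg {m : ℕ} {k : ℤ} (h : k < 0) : qbinom t m k = 0 :=
  if_neg (by omega)

lemma qbinom_of_lt {m : ℕ} {k : ℤ} (h : (m : ℤ) < k) : qbinom t m k = 0 :=
  if_neg (by omega)

lemma qbinom_zero (ht : ‖t‖ < 1) (m : ℕ) : qbinom t m 0 = 1 := by
  rw [← Nat.cast_zero, qbinom_natCast (Nat.zero_le m), Nat.sub_zero, qpochFin_zero,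
    one_mul, div_self (qpochFin_ne_zero ht ht.le m)]

lemma qbinom_symm (m : ℕ) (k : ℤ) : qbinom t m (m - k) = qbinom t m k := by
  by_cases hk : 0 ≤ k ∧ k ≤ m
  · obtain ⟨j, rfl⟩ : ∃ j : ℕ, k = j := ⟨k.toNat, by omega⟩
    rw [show (m : ℤ) - j = ((m - j : ℕ) : ℤ) by omega, qbinom_natCast (by omega),
      qbinom_natCast (by omega), Nat.sub_sub_self (by omega), mul_comm]
  · rw [qbinom, qbinom, if_neg hk, if_neg (by omega)]

lemma qbinom_self (ht : ‖t‖ < 1) (m : ℕ) : qbinom t m m = 1 := by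
  simpa using qbinom_symm (t := t) m 0 ▸ qbinom_zero ht m

lemma qbinom_succ_succ (ht : ‖t‖ < 1) (m : ℕ) (k : ℤ) :
    qbinom t (m + 1) (k + 1) = qbinom t m k + t ^ (k + 1) * qbinom t m (k + 1) := by
  rcases lt_trichotomy k (-1) with hk | rfl | hk
  · simp [qbinom_of_neg, show k < 0 by omega, show k + 1 < 0 by omega]
  · simp [qbinom_of_neg, qbinom_zero ht]
  obtain ⟨j, rfl⟩ : ∃ j : ℕ, k = j := ⟨k.toNat, by omega⟩
  rcases lt_trichotomy j m with hj | rfl | hj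
  · obtain ⟨d, rfl⟩ : ∃ d, m = j + 1 + d := ⟨m - (j + 1), by omega⟩
    rw [show (j : ℤ) + 1 = ((j + 1 : ℕ) : ℤ) by push_cast; ring, zpow_natCast,
      qbinom_natCast (by omega), qbinom_natCast (by omega), qbinom_natCast (by omega),
      show j + 1 + d + 1 - (j + 1) = d + 1 by omega, show j + 1 + d - j = d + 1 by omega,
      show j + 1 + d - (j + 1) = d by omega]
    simp only [qpochFin_succ]
    have hj1 := one_sub_mul_pow_ne_zero ht ht.le j
    have hd1 := one_sub_mul_pow_ne_zero ht ht.le d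
    field_simp
    ring
  · rw [qbinom_of_lt (by omega : ((j : ℕ) : ℤ) < j + 1), ← Nat.cast_succ, qbinom_self ht,
      qbinom_self ht]
    ring
  · rw [qbinom_of_lt (by omega), qbinom_of_lt (by omega), qbinom_of_lt (by omega)]
    ring

lemma qbinom_succ_succ' (ht : ‖t‖ < 1) (m : ℕ) (k : ℤ) :
    qbinom t (m + 1) (k + 1) = qbinom t m (k + 1) + t ^ ((m : ℤ) - k) * qbinom t m k := by
  have h := qbinom_succ_succ ht m (m - (k + 1))
  rw [← qbinom_symm, ← qbinom_symm m k, ← qbinom_symm m (k + 1)]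
  convert h using 3 <;> push_cast <;> ring_nf

lemma qbinom_add_two (ht : ‖t‖ < 1) (ht0 : t ≠ 0) (m : ℕ) (k : ℤ) :
    qbinom t (m + 2) (k + 1) = (1 + t ^ (m + 1)) * qbinom t m k
      + t ^ ((m : ℤ) + 1 - k) * qbinom t m (k - 1) + t ^ (k + 1) * qbinom t m (k + 1) := by
  have hk := qbinom_succ_succ ht m (k - 1)
  rw [sub_add_cancel] at hk
  rw [qbinom_succ_succ' ht (m + 1), qbinom_succ_succ ht m k, hk, Nat.cast_succ]
  have hpow : t ^ ((m : ℤ) + 1 - k) * t ^ k = t ^ (m + 1) := by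
    rw [← zpow_add₀ ht0, sub_add_cancel, ← Nat.cast_succ, zpow_natCast]
  linear_combination qbinom t m k * hpow

lemma exists_norm_qpochFin_self_and_inv_le (ht : ‖t‖ < 1) :
    ∃ C, ∀ n, ‖qpochFin t t n‖ ≤ C ∧ ‖(qpochFin t t n)⁻¹‖ ≤ C := by
  have h := tendsto_qpochFin (a := t) ht
  obtain ⟨A, hA⟩ := isBounded_iff_forall_norm_le.mp (Metric.isBounded_range_of_tendsto _ h)
  obtain ⟨B, hB⟩ := isBounded_iff_forall_norm_le.mp
    (Metric.isBounded_range_of_tendsto _ (h.inv₀ (qpoch_ne_zero ht ht)))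
  exact ⟨max A B, fun n => ⟨(hA _ ⟨n, rfl⟩).trans (le_max_left _ _),
    (hB _ ⟨n, rfl⟩).trans (le_max_right _ _)⟩⟩

lemma exists_norm_qbinom_le (ht : ‖t‖ < 1) : ∃ C, ∀ m k, ‖qbinom t m k‖ ≤ C := by
  obtain ⟨C, hC⟩ := exists_norm_qpochFin_self_and_inv_le ht
  have hC0 : 0 ≤ C := (norm_nonneg _).trans (hC 0).1
  refine ⟨C * (C * C), fun m k => ?_⟩
  rw [qbinom]
  split_ifs
  · rw [div_eq_mul_inv, mul_inv, norm_mul, norm_mul]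
    gcongr
    exacts [(hC _).1, (hC _).2, (hC _).2]
  · simp only [norm_zero]
    positivity

lemma tendsto_qbinom_central (ht : ‖t‖ < 1) (n : ℤ) :
    Tendsto (fun N : ℕ => qbinom t (2 * N) (N + n)) atTop (𝓝 (qpoch t t)⁻¹) := by
  have h := tendsto_qpochFin (a := t) ht
  have hP := qpoch_ne_zero ht ht
  have hto : ∀ f : ℕ → ℕ, (∀ N, N - n.natAbs ≤ f N) →
      Tendsto (fun N => qpochFin t t (f N)) atTop (𝓝 (qpoch t t)) := fun f hf =>
    h.comp (tendsto_atTop_mono hf (tendsto_sub_atTop_nat _))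
  have hlim := (hto (2 * ·) (by omega)).div
    ((hto (fun N => ((N : ℤ) + n).toNat) (by omega)).mul
      (hto (fun N => 2 * N - ((N : ℤ) + n).toNat) (by omega))) (mul_ne_zero hP hP)
  rw [div_mul_cancel_left₀ hP] at hlim
  refine hlim.congr' ?_
  filter_upwards [eventually_ge_atTop n.natAbs] with N hN
  rw [qbinom, if_pos (by omega), Pi.div_apply]

end qbinom

section theta

variable {q z : ℂ}

noncomputable def theta (z q : ℂ) : ℂ := ∑' n : ℤ, q ^ (n ^ 2) * z ^ n

lemma norm_theta_term_le (hq : ‖q‖ ≤ 1) (n : ℤ) :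
    ‖q ^ (n ^ 2) * z ^ n‖ ≤ max ‖z * q‖ ‖q / z‖ ^ n.natAbs := by
  have key (w : ℂ) (k : ℕ) : ‖q ^ (k ^ 2) * w ^ k‖ ≤ ‖w * q‖ ^ k := by
    rw [norm_mul, norm_mul, norm_pow, norm_pow, mul_pow, mul_comm]
    exact mul_le_mul_of_nonneg_left
      (pow_le_pow_of_le_one (norm_nonneg q) hq (Nat.le_self_pow two_ne_zero k)) (by positivity)
  obtain ⟨k, rfl | rfl⟩ := Int.eq_nat_or_neg n
  · have := (key z k).trans (pow_le_pow_left₀ (norm_nonneg _) (le_max_left _ ‖q / z‖) k)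
    simpa [← zpow_natCast] using this
  · have := (key z⁻¹ k).trans
      (pow_le_pow_left₀ (norm_nonneg _) (le_max_right ‖z * q‖ _) k)
    simpa [← zpow_natCast, div_eq_inv_mul] using this

lemma summable_theta_term (hq : ‖q‖ ≤ 1) (hzq : ‖z * q‖ < 1) (hqz : ‖q / z‖ < 1) :
    Summable fun n : ℤ => q ^ (n ^ 2) * z ^ n :=
  Summable.of_norm_bounded
    (summable_pow_natAbs ((norm_nonneg _).trans (le_max_left _ _)) (max_lt hzq hqz))
    (norm_theta_term_le hq)

lemma theta_eq_theta_add_mul_theta (hq0 : q ≠ 0) (hz0 : z ≠ 0)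
    (h : Summable fun n : ℤ => q ^ (n ^ 2) * z ^ n) :
    theta z q = theta (z ^ 2) (q ^ 4) + z * q * theta (z ^ 2 * q ^ 4) (q ^ 4) := by
  have h2 := mul_right_injective₀ (two_ne_zero' ℤ)
  have he := h.comp_injective h2
  have ho := h.comp_injective ((add_left_injective 1).comp h2)
  rw [theta, (HasSum.int_even_add_odd (f := fun n : ℤ => q ^ (n ^ 2) * z ^ n) he.hasSum
    ho.hasSum).tsum_eq, theta, theta, ← tsum_mul_left]
  congr 1 <;> refine tsum_congr fun a => ?_
  · simp only [Function.comp_apply, ← zpow_natCast, ← zpow_mul]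
    ring_nf
  · simp only [Function.comp_apply, mul_zpow, ← zpow_natCast, ← zpow_mul]
    rw [show (2 * a + 1) ^ 2 = 4 * a ^ 2 + 4 * a + 1 by ring]
    simp only [zpow_add₀ hq0, zpow_add₀ hz0, zpow_one]
    push_cast
    ring_nf

end theta

section tripleProduct

variable {q z : ℂ}

noncomputable def finiteThetaTerm (q z : ℂ) (N : ℕ) (n : ℤ) : ℂ :=
  q ^ (n ^ 2) * z ^ n * qbinom (q ^ 2) (2 * N) (N + n)

lemma finiteThetaTerm_succ (hq : ‖q‖ < 1) (hq0 : q ≠ 0) (hz0 : z ≠ 0) (N : ℕ) (n : ℤ) :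
    finiteThetaTerm q z (N + 1) n =
      (1 + q ^ (4 * N + 2)) * finiteThetaTerm q z N n
      + z * q ^ (2 * N + 1) * finiteThetaTerm q z N (n - 1)
      + q ^ (2 * N + 1) / z * finiteThetaTerm q z N (n + 1) := by
  have hq2 := norm_pow_lt_one hq two_ne_zero
  have hdown : q ^ (n ^ 2) * z ^ n * (q ^ 2) ^ (((2 * N : ℕ) : ℤ) + 1 - (N + n)) =
      z * q ^ (2 * N + 1) * (q ^ ((n - 1) ^ 2) * z ^ (n - 1)) := by
    rw [← zpow_natCast q 2, ← zpow_mul, ← zpow_natCast q (2 * N + 1),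
      show (n - 1) ^ 2 = n ^ 2 + (-2 * n + 1) by ring,
      show ((2 : ℕ) : ℤ) * (((2 * N : ℕ) : ℤ) + 1 - (N + n)) =
        ((2 * N + 1 : ℕ) : ℤ) + (-2 * n + 1) by push_cast; ring]
    simp only [zpow_add₀ hq0, zpow_sub₀ hz0, zpow_one]
    field_simp
  have hup : q ^ (n ^ 2) * z ^ n * (q ^ 2) ^ ((N : ℤ) + n + 1) =
      q ^ (2 * N + 1) / z * (q ^ ((n + 1) ^ 2) * z ^ (n + 1)) := by
    rw [← zpow_natCast q 2, ← zpow_mul, ← zpow_natCast q (2 * N + 1),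
      show (n + 1) ^ 2 = n ^ 2 + (2 * n + 1) by ring,
      show ((2 : ℕ) : ℤ) * ((N : ℤ) + n + 1) = ((2 * N + 1 : ℕ) : ℤ) + (2 * n + 1) by
        push_cast; ring]
    simp only [zpow_add₀ hq0, zpow_add₀ hz0, zpow_one]
    field_simp
  simp only [finiteThetaTerm]
  rw [show 2 * (N + 1) = 2 * N + 2 by ring,
    show ((N + 1 : ℕ) : ℤ) + n = (N + n) + 1 by push_cast; ring,
    qbinom_add_two hq2 (pow_ne_zero 2 hq0), show (N : ℤ) + (n - 1) = N + n - 1 by ring,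
    show (N : ℤ) + (n + 1) = N + n + 1 by ring, ← pow_mul,
    show 2 * (2 * N + 1) = 4 * N + 2 by ring]
  linear_combination qbinom (q ^ 2) (2 * N) (N + n - 1) * hdown +
    qbinom (q ^ 2) (2 * N) (N + n + 1) * hup

lemma summable_finiteThetaTerm (N : ℕ) : Summable (finiteThetaTerm q z N) := by
  refine summable_of_ne_finset_zero (s := Finset.Icc (-(N : ℤ)) N) fun n hn => ?_
  rw [Finset.mem_Icc, not_and_or, not_le, not_le] at hn
  rcases hn with hn | hn
  · rw [finiteThetaTerm, qbinom_of_neg (by omega), mul_zero]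
  · rw [finiteThetaTerm, qbinom_of_lt (by push_cast; omega), mul_zero]

lemma qpochFin_mul_qpochFin_eq_tsum_finiteThetaTerm (hq : ‖q‖ < 1) (hq0 : q ≠ 0)
    (hz0 : z ≠ 0) (N : ℕ) :
    qpochFin (-(z * q)) (q ^ 2) N * qpochFin (-(q / z)) (q ^ 2) N =
      ∑' n : ℤ, finiteThetaTerm q z N n := by
  have hq2 := norm_pow_lt_one hq two_ne_zero
  induction N with
  | zero =>
    rw [tsum_eq_single 0 fun n hn => by rw [finiteThetaTerm, qbinom, if_neg (by omega), mul_zero]]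
    simp [finiteThetaTerm, qbinom_zero hq2]
  | succ N ih =>
    have hT := summable_finiteThetaTerm (q := q) (z := z) N
    have hdown : Summable fun n => finiteThetaTerm q z N (n - 1) :=
      hT.comp_injective (sub_left_injective (b := 1))
    have hup : Summable fun n => finiteThetaTerm q z N (n + 1) :=
      hT.comp_injective (add_left_injective 1)
    have shift_down : ∑' n, finiteThetaTerm q z N (n - 1) = ∑' n, finiteThetaTerm q z N n :=
      (Equiv.subRight 1).tsum_eq _
    have shift_up : ∑' n, finiteThetaTerm q z N (n + 1) = ∑' n, finiteThetaTerm q z N n :=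
      (Equiv.addRight 1).tsum_eq _
    rw [tsum_congr (finiteThetaTerm_succ hq hq0 hz0 N),
      ((hT.mul_left _).add (hdown.mul_left _)).tsum_add (hup.mul_left _),
      (hT.mul_left _).tsum_add (hdown.mul_left _), tsum_mul_left, tsum_mul_left, tsum_mul_left,
      shift_down, shift_up, qpochFin_succ, qpochFin_succ,
      mul_mul_mul_comm, ih]
    field_simp
    ring

theorem theta_eq_qpoch_mul_jac (hq : ‖q‖ < 1) (hq0 : q ≠ 0) (hz0 : z ≠ 0)
    (hzq : ‖z * q‖ < 1) (hqz : ‖q / z‖ < 1) :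
    theta z q = qpoch (q ^ 2) (q ^ 2) * jac (-(z * q)) (q ^ 2) := by
  have hq2 := norm_pow_lt_one hq two_ne_zero
  have hP := qpoch_ne_zero hq2 hq2
  obtain ⟨C, hC⟩ := exists_norm_qbinom_le hq2
  have hM0 : 0 ≤ max ‖z * q‖ ‖q / z‖ := (norm_nonneg _).trans (le_max_left _ _)
  have hprod : Tendsto (fun N => qpochFin (-(z * q)) (q ^ 2) N * qpochFin (-(q / z)) (q ^ 2) N)
      atTop (𝓝 (jac (-(z * q)) (q ^ 2))) := by
    rw [jac, show q ^ 2 / -(z * q) = -(q / z) by field_simp]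
    exact (tendsto_qpochFin hq2).mul (tendsto_qpochFin hq2)
  have hsum : Tendsto (fun N => ∑' n, finiteThetaTerm q z N n) atTop
      (𝓝 (∑' n : ℤ, q ^ (n ^ 2) * z ^ n * (qpoch (q ^ 2) (q ^ 2))⁻¹)) :=
    tendsto_tsum_of_dominated_convergence
      ((summable_pow_natAbs hM0 (max_lt hzq hqz)).mul_right C)
      (fun n => (tendsto_qbinom_central hq2 n).const_mul _)
      (.of_forall fun N n => by
        rw [finiteThetaTerm, norm_mul]
        exact mul_le_mul (norm_theta_term_le hq.le n) (hC _ _) (norm_nonneg _) (pow_nonneg hM0 _))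
  have h := tendsto_nhds_unique (hprod.congr
    (qpochFin_mul_qpochFin_eq_tsum_finiteThetaTerm hq hq0 hz0)) hsum
  rw [tsum_mul_right] at h
  rw [h, theta]
  field_simp

end tripleProduct

section identity

variable {q : ℂ}

lemma Jm16_mul_jac_sub_jac (hq : ‖q‖ < 1) (hq0 : q ≠ 0) :
    Jm 16 q * (q * jac (-q ^ 2) (q ^ 16) - jac (-q ^ 6) (q ^ 16)) =
      -(Jm 4 q * jac q (q ^ 4)) := by
  have hqk (k : ℕ) (hk : k ≠ 0 := by norm_num) := norm_pow_lt_one hq hk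
  have e1 : -q⁻¹ * q ^ 2 = -q := by field_simp
  have e2 : q ^ 2 / -q⁻¹ = -q ^ 3 := by field_simp
  have hq1 : ‖-q⁻¹ * q ^ 2‖ < 1 := by rwa [e1, norm_neg]
  have hq3 : ‖q ^ 2 / -q⁻¹‖ < 1 := by rw [e2, norm_neg]; exact hqk 3
  have h4 : theta (-q⁻¹) (q ^ 2) = Jm 4 q * jac q (q ^ 4) := by
    rw [theta_eq_qpoch_mul_jac (hqk 2) (by simpa) (by simpa) hq1 hq3, e1, neg_neg, ← pow_mul,
      Jm]
  have h16a : theta (q ^ 2)⁻¹ (q ^ 8) = Jm 16 q * jac (-q ^ 6) (q ^ 16) := by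
    rw [theta_eq_qpoch_mul_jac (hqk 8) (by simpa) (by simpa) (by field_simp; exact hqk 6)
      (by field_simp; exact hqk 10), ← pow_mul, Jm,
      show (q ^ 2)⁻¹ * q ^ 8 = q ^ 6 by field_simp]
  have h16b : theta (q ^ 6) (q ^ 8) = Jm 16 q * jac (-q ^ 2) (q ^ 16) := by
    rw [theta_eq_qpoch_mul_jac (hqk 8) (by simpa) (by simpa) (by rw [← pow_add]; exact hqk 14)
      (by field_simp; exact hqk 2), ← pow_mul, Jm, ← pow_add,
      ← jac_div_left _ _ (by simpa), show q ^ 16 / -q ^ 14 = -q ^ 2 by field_simp]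
  have hsplit : theta (-q⁻¹) (q ^ 2) = theta (q ^ 2)⁻¹ (q ^ 8) - q * theta (q ^ 6) (q ^ 8) := by
    rw [theta_eq_theta_add_mul_theta (by simpa) (by simpa)
      (summable_theta_term (hqk 2).le hq1 hq3), e1, ← pow_mul,
      show (-q⁻¹) ^ 2 = (q ^ 2)⁻¹ by ring, show (q ^ 2)⁻¹ * q ^ 8 = q ^ 6 by field_simp]
    ring
  rw [h4, h16a, h16b] at hsplit
  linear_combination hsplit

lemma Jm4_mul_jac_mul_Jm2_sq (hq : ‖q‖ < 1) :
    Jm 4 q * jac q (q ^ 4) * Jm 2 q ^ 2 =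
      jac (q ^ 2) (q ^ 16) * jac (q ^ 4) (q ^ 16) * jac (q ^ 4) (q ^ 16) * jac (q ^ 6) (q ^ 16) *
        jac (q ^ 8) (q ^ 16) * Jm 1 q * Jm 16 q ^ 2 := by
  have hqk (k : ℕ) (hk : k ≠ 0 := by norm_num) := norm_pow_lt_one hq hk
  have j26 := jac_sq_mul_jac_sq (a := q ^ 2) (hqk 8)
  have j2 := jac_self_pow_four (hqk 2)
  have j4 := jac_self_pow_four (hqk 4)
  have j8 := jac_self_sq (q ^ 8)
  have J1 := Jm_eq_qpoch_mul_Jm q hq 1 one_ne_zero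
  have J2 := Jm_eq_qpoch_mul_Jm q hq 2 two_ne_zero
  have J4 := Jm_eq_qpoch_mul_Jm q hq 4 four_ne_zero
  have J8 := Jm_eq_qpoch_mul_Jm q hq 8 (by norm_num)
  simp only [← pow_mul, Nat.reduceMul, pow_one] at j26 J1 J2 J4 J8 j2 j4 j8
  rw [show q ^ 8 / q ^ 2 = q ^ 6 by field_simp, j2] at j26
  rw [jac_self_pow_four hq, J1, J2, J4, J8, ← j26, j4, j8]
  ring

end identity

theorem theta_identity_j1 (q : ℂ) (hq : ‖q‖ < 1) :
    q * jac (-q ^ 2) (q ^ 16) - jac (-q ^ 6) (q ^ 16) =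
      -(jac (q ^ 2) (q ^ 16) * jac (q ^ 4) (q ^ 16) * jac (q ^ 4) (q ^ 16) *
          jac (q ^ 6) (q ^ 16) * jac (q ^ 8) (q ^ 16) * Jm 1 q * Jm 16 q / Jm 2 q ^ 2) := by
  rcases eq_or_ne q 0 with rfl | hq0
  · simp [jac, Jm]
  have hqk (k : ℕ) (hk : k ≠ 0 := by norm_num) := norm_pow_lt_one hq hk
  have hJ2 : Jm 2 q ≠ 0 := qpoch_ne_zero (hqk 2) (hqk 2)
  have hJ16 : Jm 16 q ≠ 0 := qpoch_ne_zero (hqk 16) (hqk 16)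
  rw [← mul_right_inj' hJ16, Jm16_mul_jac_sub_jac hq hq0]
  field_simp
  linear_combination -Jm4_mul_jac_mul_Jm2_sq hq
end
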